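/- For every n ≥ 4, the quadratic form Q_C(x) = Σ_{i=1}^{n} xᵢ² + x₁(x₂ + x₃ + x₄) − Σ_{i=4}^{n−1} xᵢx_{i+1} on ℝⁿ is positive definite, takes integer values on ℤⁿ (hence Q_C(v) ≥ 1 for every nonzero v ∈ ℤⁿ), and satisfies Q_C(2e₁ − e₂ − ⋯ − eₙ) = 1 and Q_C(eⱼ) = 1 for all j = 2,…,n. (Hence for n ≥ 4 the Friedman–Smith monodromy cone is contained in a cone of the central cone decomposition.) -/
import Mathlib


open Finset

/-- Extension of a vector on `Fin n` to `ℕ` by zero. -/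
noncomputable def extf (n : ℕ) (x : Fin n → ℝ) (i : ℕ) : ℝ :=
  if h : i < n then x ⟨i, h⟩ else 0

lemma extf_lt {n : ℕ} (x : Fin n → ℝ) {i : ℕ} (h : i < n) : extf n x i = x ⟨i, h⟩ :=
  dif_pos h

lemma extf_ge {n : ℕ} (x : Fin n → ℝ) {i : ℕ} (h : n ≤ i) : extf n x i = 0 :=
  dif_neg (by omega)

lemma extf_val {n : ℕ} (x : Fin n → ℝ) (i : Fin n) : extf n x (i : ℕ) = x i := by
  rw [extf_lt x i.isLt]

lemma tele_aux (y : ℕ → ℝ) : ∀ m, 3 ≤ m →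
    ∑ i ∈ range m, (if 3 ≤ i then y i ^ 2 - y (i + 1) ^ 2 else 0) = y 3 ^ 2 - y m ^ 2 := by
  intro m hm
  induction m, hm using Nat.le_induction with
  | base =>
    rw [Finset.sum_eq_zero]
    · ring
    · intro i hi
      rw [if_neg]
      simp only [mem_range] at hi
      omega
  | succ k hk ih =>
    rw [Finset.sum_range_succ, ih, if_pos hk]
    ring

lemma count_aux (n : ℕ) (hn : 3 ≤ n) :
    ∑ i ∈ range n, (if 3 ≤ i then (1 : ℝ) else 0) = (n : ℝ) - 3 := by
  induction n, hn using Nat.le_induction with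
  | base =>
    rw [Finset.sum_eq_zero]
    · norm_num
    · intro i hi
      rw [if_neg]
      simp only [mem_range] at hi
      omega
  | succ k hk ih =>
    rw [Finset.sum_range_succ, ih, if_pos hk]
    push_cast
    ring

lemma split_aux (n : ℕ) (hn : 3 ≤ n) (f : ℕ → ℝ) :
    ∑ i ∈ range n, f i = f 0 + f 1 + f 2 + ∑ i ∈ range n, (if 3 ≤ i then f i else 0) := by
  induction n, hn using Nat.le_induction with
  | base =>
    rw [Finset.sum_eq_zero (s := range 3) (f := fun i => if 3 ≤ i then f i else 0)]
    · simp [Finset.sum_range_succ]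
    · intro i hi
      rw [if_neg]
      simp only [mem_range] at hi
      omega
  | succ k hk ih =>
    rw [Finset.sum_range_succ, Finset.sum_range_succ (f := fun i => if 3 ≤ i then f i else 0),
      if_pos hk, ih]
    ring

lemma key_sos (n : ℕ) (hn : 4 ≤ n) (x : ℕ → ℝ) (hx : x n = 0) :
    (∑ i ∈ range n, x i ^ 2) + x 0 * (x 1 + x 2 + x 3)
      - ∑ i ∈ range n, (if 3 ≤ i then x i * x (i + 1) else 0)
    = ((x 1 - x 2) ^ 2 + (x 0 + x 1 + x 2) ^ 2 + (x 0 + x 3) ^ 2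
       + ∑ i ∈ range n, (if 3 ≤ i then (x i - x (i + 1)) ^ 2 else 0)) / 2 := by
  have h1 : ∀ i ∈ range n, (if 3 ≤ i then (x i - x (i + 1)) ^ 2 else 0)
      = (2 * (if 3 ≤ i then x i ^ 2 else 0) - 2 * (if 3 ≤ i then x i * x (i + 1) else 0))
        - (if 3 ≤ i then x i ^ 2 - x (i + 1) ^ 2 else 0) := by
    intro i _
    split <;> ring
  have hchain : ∑ i ∈ range n, (if 3 ≤ i then (x i - x (i + 1)) ^ 2 else 0)
      = 2 * (∑ i ∈ range n, (if 3 ≤ i then x i ^ 2 else 0))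
        - 2 * (∑ i ∈ range n, (if 3 ≤ i then x i * x (i + 1) else 0))
        - (x 3 ^ 2 - x n ^ 2) := by
    rw [Finset.sum_congr rfl h1, Finset.sum_sub_distrib, Finset.sum_sub_distrib,
      ← Finset.mul_sum, ← Finset.mul_sum, tele_aux x n (by omega)]
  have h3 := split_aux n (by omega) (fun i => x i ^ 2)
  rw [hchain, h3, hx]
  ring

lemma FS_inner_sum {n : ℕ} (x : Fin n → ℝ) (i : Fin n) :
    ∑ j : Fin n, (if (j : ℕ) = (i : ℕ) + 1 ∧ 3 ≤ (i : ℕ) then x i * x j else 0)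
      = if 3 ≤ (i : ℕ) then extf n x (i : ℕ) * extf n x ((i : ℕ) + 1) else 0 := by
  by_cases h3 : 3 ≤ (i : ℕ)
  · simp only [h3, and_true, if_true]
    by_cases hlt : (i : ℕ) + 1 < n
    · rw [extf_val, extf_lt x hlt]
      have hiff : ∀ j : Fin n, ((j : ℕ) = (i : ℕ) + 1) ↔ j = ⟨(i : ℕ) + 1, hlt⟩ := by
        intro j
        constructor
        · intro h; exact Fin.ext h
        · intro h; subst h; rfl
      simp only [hiff]
      rw [Finset.sum_ite_eq' univ (⟨(i : ℕ) + 1, hlt⟩ : Fin n) (fun j => x i * x j)]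
      simp
    · rw [extf_ge x (i := (i : ℕ) + 1) (by omega), mul_zero]
      apply Finset.sum_eq_zero
      intro j _
      rw [if_neg]
      have := j.isLt
      omega
  · simp only [h3, and_false, if_false]
    simp

lemma fin_form (n : ℕ) (hn : 4 ≤ n) (x : Fin n → ℝ) (h0 : 0 < n) (h1 : 1 < n) (h2 : 2 < n)
    (h3 : 3 < n) :
    (∑ i, x i ^ 2) + x ⟨0, h0⟩ * (x ⟨1, h1⟩ + x ⟨2, h2⟩ + x ⟨3, h3⟩)
      - (∑ i : Fin n, ∑ j : Fin n, (if (j : ℕ) = (i : ℕ) + 1 ∧ 3 ≤ (i : ℕ) then x i * x j else 0))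
    = (∑ i ∈ range n, extf n x i ^ 2) + extf n x 0 * (extf n x 1 + extf n x 2 + extf n x 3)
      - ∑ i ∈ range n, (if 3 ≤ i then extf n x i * extf n x (i + 1) else 0) := by
  have e1 : ∑ i, x i ^ 2 = ∑ i ∈ range n, extf n x i ^ 2 := by
    rw [← Fin.sum_univ_eq_sum_range (fun i => extf n x i ^ 2) n]
    exact Finset.sum_congr rfl fun i _ => by rw [extf_val]
  have e2 : (∑ i : Fin n, ∑ j : Fin n,
        (if (j : ℕ) = (i : ℕ) + 1 ∧ 3 ≤ (i : ℕ) then x i * x j else 0))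
      = ∑ i ∈ range n, (if 3 ≤ i then extf n x i * extf n x (i + 1) else 0) := by
    rw [← Fin.sum_univ_eq_sum_range (fun i => if 3 ≤ i then extf n x i * extf n x (i + 1) else 0) n]
    exact Finset.sum_congr rfl fun i _ => FS_inner_sum x i
  rw [e1, e2, extf_lt x h0, extf_lt x h1, extf_lt x h2, extf_lt x h3]

/-- For every `n ≥ 4`, the quadratic form
`Q_C(x) = ∑_{i=1}^{n} xᵢ² + x₁(x₂ + x₃ + x₄) − ∑_{i=4}^{n−1} xᵢ x_{i+1}`
on `ℝⁿ` is positive definite, takes integer values on `ℤⁿ` (hence `Q_C(v) ≥ 1` for every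
nonzero `v ∈ ℤⁿ`), and takes the value `1` on the Friedman–Smith vectors
`2e₁ − e₂ − ⋯ − eₙ` and `e₂, …, eₙ`.  (Hence for `n ≥ 4` the Friedman–Smith monodromy cone
is contained in a cone of the central cone decomposition.)  Indices are `0`-based, so the
subtracted sum ranges over the `0`-based pairs `(i, i+1)` with `3 ≤ i`. -/
theorem FS_central_form (n : ℕ) (hn : 4 ≤ n) (Q : (Fin n → ℝ) → ℝ)
    (hQ : Q = fun x =>
      (∑ i, x i ^ 2) +
        x ⟨0, by omega⟩ * (x ⟨1, by omega⟩ + x ⟨2, by omega⟩ + x ⟨3, by omega⟩) -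
        ∑ i : Fin n, ∑ j : Fin n,
          if j.val = i.val + 1 ∧ 3 ≤ i.val then x i * x j else 0) :
    (∀ x : Fin n → ℝ, x ≠ 0 → 0 < Q x) ∧
    (∀ v : Fin n → ℤ, ∃ m : ℤ, Q (fun k => (v k : ℝ)) = (m : ℝ)) ∧
    (∀ v : Fin n → ℤ, v ≠ 0 → 1 ≤ Q fun k => (v k : ℝ)) ∧
    Q (fun k => if k.val = 0 then 2 else -1) = 1 ∧
    (∀ j : Fin n, j.val ≠ 0 → Q (Pi.single j 1) = 1) := by
  have hQr : ∀ x : Fin n → ℝ, Q x =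
      (∑ i ∈ range n, extf n x i ^ 2)
        + extf n x 0 * (extf n x 1 + extf n x 2 + extf n x 3)
        - ∑ i ∈ range n, (if 3 ≤ i then extf n x i * extf n x (i + 1) else 0) := by
    intro x
    rw [hQ]
    exact fin_form n hn x (by omega) (by omega) (by omega) (by omega)
  have hQs : ∀ x : Fin n → ℝ, Q x =
      ((extf n x 1 - extf n x 2) ^ 2 + (extf n x 0 + extf n x 1 + extf n x 2) ^ 2
        + (extf n x 0 + extf n x 3) ^ 2
        + ∑ i ∈ range n, (if 3 ≤ i then (extf n x i - extf n x (i + 1)) ^ 2 else 0)) / 2 := by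
    intro x
    rw [hQr x]
    exact key_sos n hn (extf n x) (extf_ge x le_rfl)
  have hpos : ∀ x : Fin n → ℝ, x ≠ 0 → 0 < Q x := by
    intro x hx
    rw [hQs x]
    by_contra hle
    push_neg at hle
    set y : ℕ → ℝ := extf n x with hy
    have hS : 0 ≤ ∑ i ∈ range n, (if 3 ≤ i then (y i - y (i + 1)) ^ 2 else 0) :=
      Finset.sum_nonneg fun i _ => by positivity
    have q1 : (y 1 - y 2) ^ 2 = 0 :=
      le_antisymm (by nlinarith [sq_nonneg (y 0 + y 1 + y 2), sq_nonneg (y 0 + y 3)]) (sq_nonneg _)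
    have q2 : (y 0 + y 1 + y 2) ^ 2 = 0 :=
      le_antisymm (by nlinarith [sq_nonneg (y 1 - y 2), sq_nonneg (y 0 + y 3)]) (sq_nonneg _)
    have q3 : (y 0 + y 3) ^ 2 = 0 :=
      le_antisymm (by nlinarith [sq_nonneg (y 1 - y 2), sq_nonneg (y 0 + y 1 + y 2)]) (sq_nonneg _)
    have hSz : ∑ i ∈ range n, (if 3 ≤ i then (y i - y (i + 1)) ^ 2 else 0) = 0 := by
      nlinarith [sq_nonneg (y 1 - y 2), sq_nonneg (y 0 + y 1 + y 2), sq_nonneg (y 0 + y 3)]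
    have hz := (Finset.sum_eq_zero_iff_of_nonneg (fun i _ => by positivity)).1 hSz
    have hstep : ∀ i, 3 ≤ i → i < n → y i = y (i + 1) := by
      intro i h3 hi
      have h := hz i (mem_range.2 hi)
      rw [if_pos h3] at h
      have h' : y i - y (i + 1) = 0 := by
        have := (pow_eq_zero_iff (two_ne_zero)).1 h
        exact this
      linarith
    have hdown : ∀ d, 3 ≤ n - d → y (n - d) = 0 := by
      intro d
      induction d with
      | zero =>
        intro _
        have : y n = 0 := extf_ge x le_rfl
        simpa using this
      | succ k ih =>
        intro h
        have h1 : n - (k + 1) + 1 = n - k := by omega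
        rw [hstep (n - (k + 1)) (by omega) (by omega), h1, ih (by omega)]
    have h33 : y 3 = 0 := by
      have := hdown (n - 3) (by omega)
      rwa [(by omega : n - (n - 3) = 3)] at this
    have h00 : y 0 = 0 := by
      have := (pow_eq_zero_iff (two_ne_zero)).1 q3
      linarith
    have h12 : y 1 - y 2 = 0 := (pow_eq_zero_iff (two_ne_zero)).1 q1
    have h012 : y 0 + y 1 + y 2 = 0 := (pow_eq_zero_iff (two_ne_zero)).1 q2
    have h11 : y 1 = 0 := by linarith
    have h22 : y 2 = 0 := by linarith
    apply hx
    funext k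
    have hk : y (k : ℕ) = 0 := by
      rcases Nat.lt_or_ge (k : ℕ) 3 with hlt | hge
      · interval_cases h : (k : ℕ)
        · exact h00
        · exact h11
        · exact h22
      · have := hdown (n - (k : ℕ)) (by omega : 3 ≤ n - (n - (k : ℕ)))
        rwa [(by omega : n - (n - (k : ℕ)) = (k : ℕ))] at this
    rw [hy] at hk
    rwa [extf_val] at hk
  have hint : ∀ v : Fin n → ℤ, Q (fun k => (v k : ℝ)) =
      (((∑ i, v i ^ 2) +
        v ⟨0, by omega⟩ * (v ⟨1, by omega⟩ + v ⟨2, by omega⟩ + v ⟨3, by omega⟩) -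
        ∑ i : Fin n, ∑ j : Fin n,
          if j.val = i.val + 1 ∧ 3 ≤ i.val then v i * v j else 0 : ℤ) : ℝ) := by
    intro v
    rw [hQ]
    push_cast [apply_ite (fun z : ℤ => (z : ℝ))]
    ring
  refine ⟨hpos, fun v => ⟨_, hint v⟩, ?_, ?_, ?_⟩
  · intro v hv
    have hne : (fun k => (v k : ℝ)) ≠ 0 := by
      intro h
      apply hv
      funext k
      have := congrFun h k
      rw [Pi.zero_apply] at this
      exact_mod_cast this
    have hp := hpos _ hne
    rw [hint v] at hp ⊢
    have h0 : (0 : ℤ) <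
        (∑ i, v i ^ 2) +
          v ⟨0, by omega⟩ * (v ⟨1, by omega⟩ + v ⟨2, by omega⟩ + v ⟨3, by omega⟩) -
          ∑ i : Fin n, ∑ j : Fin n,
            if j.val = i.val + 1 ∧ 3 ≤ i.val then v i * v j else 0 := by exact_mod_cast hp
    exact_mod_cast h0
  · -- Friedman–Smith vector
    set w : Fin n → ℝ := fun k => if (k : ℕ) = 0 then 2 else -1 with hwdef
    have hw : ∀ i, i < n → extf n w i = if i = 0 then 2 else -1 := by
      intro i hi
      rw [extf_lt w hi, hwdef]
    rw [hQr w]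
    have hA : ∑ i ∈ range n, extf n w i ^ 2 = (n : ℝ) + 3 := by
      have hterm : ∀ i ∈ range n, extf n w i ^ 2 = 1 + (if i = 0 then (3 : ℝ) else 0) := by
        intro i hi
        rw [hw i (mem_range.1 hi)]
        split <;> norm_num
      rw [Finset.sum_congr rfl hterm, Finset.sum_add_distrib, Finset.sum_const,
        Finset.sum_ite_eq' (range n) 0 (fun _ => (3 : ℝ)), if_pos (mem_range.2 (by omega))]
      simp
    have hC : ∑ i ∈ range n, (if 3 ≤ i then extf n w i * extf n w (i + 1) else 0)
        = ((n : ℝ) - 3) - 1 := by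
      have hterm : ∀ i ∈ range n, (if 3 ≤ i then extf n w i * extf n w (i + 1) else 0)
          = (if 3 ≤ i then (1 : ℝ) else 0) - (if i = n - 1 then 1 else 0) := by
        intro i hi
        simp only [mem_range] at hi
        by_cases h3 : 3 ≤ i
        · rw [if_pos h3, if_pos h3, hw i hi, if_neg (by omega)]
          by_cases hl : i = n - 1
          · rw [if_pos hl, extf_ge w (by omega)]
            norm_num
          · rw [if_neg hl, hw (i + 1) (by omega), if_neg (by omega)]
            norm_num
        · rw [if_neg h3, if_neg h3, if_neg (by omega)]
          norm_num
      rw [Finset.sum_congr rfl hterm, Finset.sum_sub_distrib, count_aux n (by omega),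
        Finset.sum_ite_eq' (range n) (n - 1) (fun _ => (1 : ℝ)), if_pos (mem_range.2 (by omega))]
    rw [hA, hC, hw 0 (by omega), hw 1 (by omega), hw 2 (by omega), hw 3 (by omega)]
    norm_num
    linarith
  · intro j hj
    rw [hQ]
    beta_reduce
    have h0 : (Pi.single j 1 : Fin n → ℝ) ⟨0, by omega⟩ = 0 := by
      apply Pi.single_eq_of_ne
      intro h
      apply hj
      rw [← h]
    have hsum1 : ∑ i, (Pi.single j 1 : Fin n → ℝ) i ^ 2 = 1 := by
      rw [Fintype.sum_eq_single j (fun i hi => by rw [Pi.single_eq_of_ne hi]; norm_num),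
        Pi.single_eq_same]
      norm_num
    have hdzero : (∑ i : Fin n, ∑ j' : Fin n,
        if (j' : ℕ) = (i : ℕ) + 1 ∧ 3 ≤ (i : ℕ)
          then (Pi.single j 1 : Fin n → ℝ) i * (Pi.single j 1 : Fin n → ℝ) j' else 0) = 0 := by
      apply Finset.sum_eq_zero
      intro i _
      apply Finset.sum_eq_zero
      intro j' _
      split
      · rename_i hc
        obtain ⟨hj', _⟩ := hc
        have hij : j' ≠ i := by
          intro h
          subst h
          omega
        rcases eq_or_ne i j with rfl | hne
        · rw [Pi.single_eq_of_ne hij, mul_zero]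
        · rw [Pi.single_eq_of_ne hne, zero_mul]
      · rfl
    rw [hsum1, h0, hdzero]
    ring
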